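/- arXiv:1105.5530 — 8 statements merged into one kernel-verified Lean document; each statement's English description precedes it below -/
import Mathlib

section
/- Let m and N be positive integers with N ≥ 2, and define L_{-2m}(N) = 2^{2m} · N · Σ_{k=1}^{N-1} (sin(πk/N))^{2m}. Then L_{-2m}(N) = C(2m,m)·N² + 2N² · Σ_{k=1, N|k}^{m} (-1)^k · C(2m, m-k), where the sum runs over k with 1 ≤ k ≤ m divisible by N. -/
/-! With `w = exp (2 θ i)` one has `(2 sin θ)² = -w⁻¹ (w - 1)²`, so `(2 sin θ)^(2m)` is the
Laurent polynomial `∑ⱼ (-1)^(m+j) C(2m, j) w^(j-m)`. At `θ = π k / N` the values of `w` run over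
the `N`-th roots of unity, whose power sums kill every monomial with `N ∤ j - m` and give `N` for
the others. The surviving terms are symmetric under `j ↦ 2m - j`, so they pair up around the
central term. -/

open Finset Real

theorem Finset.sum_range_two_mul_add_one_of_symm {M : Type*} [AddCommMonoid M] (m : ℕ)
    (f : ℕ → M) (hf : ∀ j ≤ 2 * m, f (2 * m - j) = f j) :
    ∑ j ∈ range (2 * m + 1), f j = f m + 2 • ∑ k ∈ Icc 1 m, f (m - k) := by
  have upper : ∑ i ∈ range m, f (m + 1 + i) = ∑ i ∈ range m, f i := by
    rw [← sum_range_reflect f m]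
    refine sum_congr rfl fun i hi => ?_
    rw [← hf _ (by rw [mem_range] at hi; omega), show 2 * m - (m + 1 + i) = m - 1 - i by omega]
  have lower : ∑ k ∈ Icc 1 m, f (m - k) = ∑ i ∈ range m, f i := by
    refine sum_nbij' (m - ·) (m - ·) ?_ ?_ ?_ ?_ ?_ <;> intro k hk <;> simp at hk ⊢ <;> omega
  rw [show 2 * m + 1 = (m + 1) + m by ring, sum_range_add, sum_range_succ, add_assoc, upper, lower,
    two_nsmul]
  abel

theorem Complex.two_mul_sin_sq (θ : ℝ) :
    ((2 * Real.sin θ : ℝ) : ℂ) ^ 2 =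
      -((Complex.exp (2 * θ * I))⁻¹ * (Complex.exp (2 * θ * I) - 1) ^ 2) := by
  have hu : Complex.exp (θ * I) ≠ 0 := Complex.exp_ne_zero _
  push_cast
  rw [show (2 : ℂ) * θ * I = θ * I + θ * I by ring, Complex.exp_add, Complex.sin, neg_mul,
    Complex.exp_neg]
  field_simp
  ring_nf
  rw [Complex.I_sq]
  ring

theorem Complex.two_mul_sin_pow_two_mul (m : ℕ) (θ : ℝ) :
    ((2 * Real.sin θ : ℝ) : ℂ) ^ (2 * m) =
      ∑ j ∈ range (2 * m + 1),
        (-1) ^ (m + j) * ((2 * m).choose j : ℂ) * Complex.exp (2 * θ * I) ^ ((j : ℤ) - m) := by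
  have hw : Complex.exp (2 * θ * I) ≠ 0 := Complex.exp_ne_zero _
  rw [pow_mul, two_mul_sin_sq, neg_pow, mul_pow, ← pow_mul, sub_pow, mul_sum, mul_sum]
  refine sum_congr rfl fun j _ => ?_
  have sign : (-1 : ℂ) ^ m * (-1) ^ (j + 2 * m) = (-1) ^ (m + j) := by
    rw [← pow_add, neg_one_pow_eq_pow_mod_two, neg_one_pow_eq_pow_mod_two (m + j),
      show (m + (j + 2 * m)) % 2 = (m + j) % 2 by omega]
  rw [zpow_sub₀ hw, zpow_natCast, zpow_natCast, one_pow, mul_one, inv_pow, ← sign]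
  field_simp

theorem IsPrimitiveRoot.sum_range_zpow_pow {K : Type*} [Field K] {ζ : K} {N : ℕ}
    (hζ : IsPrimitiveRoot ζ N) (d : ℤ) :
    ∑ k ∈ range N, (ζ ^ d) ^ k = if (N : ℤ) ∣ d then (N : K) else 0 := by
  split_ifs with hd
  · simp [(hζ.zpow_eq_one_iff_dvd d).2 hd]
  · have hpow : (ζ ^ d) ^ N = 1 := by
      rw [← zpow_natCast, ← zpow_mul, mul_comm, zpow_mul, zpow_natCast, hζ.pow_eq_one, one_zpow]
    rw [geom_sum_eq (mt (hζ.zpow_eq_one_iff_dvd d).1 hd), hpow, sub_self, zero_div]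

theorem sum_range_two_mul_sin_pow (m : ℕ) {N : ℕ} (hN : N ≠ 0) :
    ∑ k ∈ range N, (2 * Real.sin (π * k / N)) ^ (2 * m) =
      N * ∑ j ∈ range (2 * m + 1),
        if (N : ℤ) ∣ (j : ℤ) - m then (-1) ^ (m + j) * ((2 * m).choose j : ℝ) else 0 := by
  set ζ := Complex.exp (2 * π * Complex.I / N)
  have hζ : IsPrimitiveRoot ζ N := Complex.isPrimitiveRoot_exp N hN
  have expand (k : ℕ) : ((2 * Real.sin (π * k / N) : ℝ) : ℂ) ^ (2 * m) =
      ∑ j ∈ range (2 * m + 1),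
        (-1) ^ (m + j) * ((2 * m).choose j : ℂ) * (ζ ^ ((j : ℤ) - m)) ^ k := by
    have hexp : Complex.exp (2 * (π * k / N : ℝ) * Complex.I) = ζ ^ k := by
      rw [← Complex.exp_nat_mul]
      push_cast
      ring_nf
    simp_rw [Complex.two_mul_sin_pow_two_mul, hexp, ← zpow_natCast, ← zpow_mul, mul_comm]
  rw [← Complex.ofReal_inj]
  calc ((∑ k ∈ range N, (2 * Real.sin (π * k / N)) ^ (2 * m) : ℝ) : ℂ)
      = ∑ j ∈ range (2 * m + 1), (-1) ^ (m + j) * ((2 * m).choose j : ℂ) *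
          ∑ k ∈ range N, (ζ ^ ((j : ℤ) - m)) ^ k := by
        simp_rw [Complex.ofReal_sum, Complex.ofReal_pow, expand, mul_sum]
        exact sum_comm
    _ = _ := by
        rw [Complex.ofReal_mul, Complex.ofReal_sum, mul_sum]
        refine sum_congr rfl fun j _ => ?_
        rw [hζ.sum_range_zpow_pow]
        split_ifs <;> push_cast <;> ring

theorem sum_range_ite_dvd_sub_choose {R : Type*} [CommRing R] (m N : ℕ) :
    ∑ j ∈ range (2 * m + 1),
        (if (N : ℤ) ∣ (j : ℤ) - m then (-1) ^ (m + j) * ((2 * m).choose j : R) else 0) =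
      (2 * m).choose m +
        2 * ∑ k ∈ (Icc 1 m).filter (N ∣ ·), (-1) ^ k * ((2 * m).choose (m - k) : R) := by
  rw [sum_range_two_mul_add_one_of_symm]
  · rw [sum_filter, if_pos (by simp), ← two_mul, pow_mul, neg_one_sq, one_pow, one_mul,
      nsmul_eq_mul, Nat.cast_ofNat]
    congr 2
    refine sum_congr rfl fun k hk => ?_
    have hkm : k ≤ m := (mem_Icc.1 hk).2
    simp only [Nat.cast_sub hkm, sub_sub_cancel_left, dvd_neg, Int.natCast_dvd_natCast]
    rw [neg_one_pow_eq_pow_mod_two, neg_one_pow_eq_pow_mod_two k,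
      show (m + (m - k)) % 2 = k % 2 by omega]
  · intro j hj
    rw [Nat.choose_symm hj, Nat.cast_sub hj, neg_one_pow_eq_pow_mod_two,
      neg_one_pow_eq_pow_mod_two (m + j), show (m + (2 * m - j)) % 2 = (m + j) % 2 by omega,
      show ((2 * m : ℕ) : ℤ) - j - m = -((j : ℤ) - m) by push_cast; ring]
    simp only [dvd_neg]

theorem riesz_neg_even_energy (m N : ℕ) (hm : 0 < m) (hN : 2 ≤ N) :
    (2 : ℝ) ^ (2 * m) * N * ∑ k ∈ Finset.Icc 1 (N - 1),
        (Real.sin (Real.pi * k / N)) ^ (2 * m) =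
      ((2 * m).choose m) * (N : ℝ) ^ 2 +
        2 * (N : ℝ) ^ 2 *
          ∑ k ∈ (Finset.Icc 1 m).filter (fun k => N ∣ k),
            (-1 : ℝ) ^ k * ((2 * m).choose (m - k)) := by
  have zero_term : ∑ k ∈ range N, (2 * sin (π * k / N)) ^ (2 * m) =
      ∑ k ∈ Icc 1 (N - 1), (2 * sin (π * k / N)) ^ (2 * m) := by
    rw [sum_range_eq_add_Ico _ (by omega),
      Icc_sub_one_right_eq_Ico_of_not_isMin (by simp; omega)]
    simp [hm.ne']
  calc (2 : ℝ) ^ (2 * m) * N * ∑ k ∈ Icc 1 (N - 1), sin (π * k / N) ^ (2 * m)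
      = N * ∑ k ∈ range N, (2 * sin (π * k / N)) ^ (2 * m) := by
        rw [zero_term, mul_comm _ (N : ℝ), mul_assoc, mul_sum]
        simp_rw [mul_pow]
    _ = _ := by
        rw [sum_range_two_mul_sin_pow m (by omega), sum_range_ite_dvd_sub_choose]
        ring
end

section
/- For positive integers m and N ≥ 2 with N > m, one has 2^{2m} · N · Σ_{k=1}^{N-1} (sin(πk/N))^{2m} = C(2m,m) · N². -/
/-!
Write `2 sin x = -i (u - u⁻¹)` with `u = e^{ix}`. For `x = πk/N`, the binomial expansion of
`(2 sin x)^{2m}` is a combination of the powers `ζ^{k(j-m)}`, `0 ≤ j ≤ 2m`, of `ζ = e^{2πi/N}`.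
Summing over `k < N` kills every term with `j ≠ m`, since then `0 < |j - m| < N`. What remains is
`C(2m,m) N`. The term `k = 0` is zero because `m > 0`.
-/

open Finset Real

theorem IsPrimitiveRoot.geom_sum_zpow_eq_zero {K : Type*} [Field K] {ζ : K} {N : ℕ}
    (hζ : IsPrimitiveRoot ζ N) {t : ℤ} (ht : ¬ (N : ℤ) ∣ t) :
    ∑ k ∈ range N, (ζ ^ t) ^ k = 0 := by
  have hne : ζ ^ t ≠ 1 := by rwa [Ne, hζ.zpow_eq_one_iff_dvd]
  have hpow : (ζ ^ t) ^ N = 1 := by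
    rw [← zpow_natCast, ← zpow_mul, mul_comm, zpow_mul, zpow_natCast, hζ.pow_eq_one, one_zpow]
  rw [geom_sum_eq hne, hpow, sub_self, zero_div]

theorem sub_inv_pow_eq_sum_zpow {K : Type*} [Field K] {u : K} (hu : u ≠ 0) (n : ℕ) :
    (u - u⁻¹) ^ n =
      ∑ j ∈ range (n + 1), ((-1) ^ (j + n) * n.choose j) * u ^ (2 * (j : ℤ) - n) := by
  rw [sub_pow]
  refine sum_congr rfl fun j hj => ?_
  have hj : j ≤ n := Nat.lt_succ_iff.mp (mem_range.mp hj)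
  have hpow : u ^ j * (u ^ (n - j))⁻¹ = u ^ (2 * (j : ℤ) - n) := by
    rw [← zpow_natCast, ← zpow_natCast, ← zpow_neg, ← zpow_add₀ hu]
    push_cast [Nat.cast_sub hj]
    ring_nf
  rw [inv_pow, ← hpow]
  ring

theorem two_mul_sin_pow_two_mul_eq_sum (z : ℂ) (m : ℕ) :
    (2 * Complex.sin z) ^ (2 * m) =
      ∑ j ∈ range (2 * m + 1), ((-1) ^ (j + m) * (2 * m).choose j) *
        Complex.exp (2 * z * Complex.I) ^ ((j : ℤ) - m) := by
  have hsin : 2 * Complex.sin z =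
      -Complex.I * (Complex.exp (z * Complex.I) - (Complex.exp (z * Complex.I))⁻¹) := by
    rw [Complex.sin, ← Complex.exp_neg]
    ring_nf
  rw [hsin, mul_pow, sub_inv_pow_eq_sum_zpow (Complex.exp_ne_zero _), mul_sum]
  refine sum_congr rfl fun j _ => ?_
  rw [← Complex.exp_int_mul, ← Complex.exp_int_mul, pow_mul, neg_sq, Complex.I_sq,
    pow_add _ j, pow_mul, neg_one_sq, one_pow]
  push_cast
  ring_nf

theorem sum_range_two_mul_sin_pow_two_mul {m N : ℕ} (hmN : m < N) :
    ∑ k ∈ range N, (2 * Real.sin (π * k / N)) ^ (2 * m) = (2 * m).choose m * N := by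
  have hN : N ≠ 0 := by omega
  set ζ : ℂ := Complex.exp (2 * π * Complex.I / N)
  have hζ : IsPrimitiveRoot ζ N := Complex.isPrimitiveRoot_exp N hN
  have hexp (k : ℕ) : Complex.exp (2 * (π * k / N) * Complex.I) = ζ ^ k := by
    rw [← Complex.exp_nat_mul]
    ring_nf
  have hcomm (k : ℕ) (t : ℤ) : (ζ ^ k) ^ t = (ζ ^ t) ^ k := by
    rw [← zpow_natCast, ← zpow_natCast, ← zpow_mul, ← zpow_mul, mul_comm]
  apply Complex.ofReal_injective
  push_cast
  simp_rw [two_mul_sin_pow_two_mul_eq_sum, hexp, hcomm]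
  rw [sum_comm]
  simp_rw [← mul_sum]
  rw [sum_eq_single m]
  · simp [← two_mul, pow_mul]
  · intro j hj hjm
    have hdvd : ¬ (N : ℤ) ∣ (j - m) := fun h => hjm <| by
      have := Int.eq_zero_of_dvd_of_natAbs_lt_natAbs h (by simp at hj; omega)
      omega
    rw [hζ.geom_sum_zpow_eq_zero hdvd, mul_zero]
  · exact fun hm => absurd (mem_range.mpr (by omega)) hm

theorem riesz_neg_even_energy_large_N_general (m N : ℕ) (hm : 0 < m) (hNm : m < N) :
    (2 : ℝ) ^ (2 * m) * N * ∑ k ∈ Finset.Icc 1 (N - 1),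
        (Real.sin (Real.pi * k / N)) ^ (2 * m) =
      ((2 * m).choose m) * (N : ℝ) ^ 2 := by
  have hIcc : Icc 1 (N - 1) = (range N).erase 0 := by
    ext k
    simp only [mem_Icc, mem_erase, mem_range]
    omega
  have hzero : (2 * Real.sin (π * (0 : ℕ) / N)) ^ (2 * m) = 0 := by
    simp only [Nat.cast_zero, mul_zero, zero_div, Real.sin_zero]
    exact zero_pow (by omega)
  calc (2 : ℝ) ^ (2 * m) * N * ∑ k ∈ Icc 1 (N - 1), (Real.sin (π * k / N)) ^ (2 * m)
      = N * ∑ k ∈ range N, (2 * Real.sin (π * k / N)) ^ (2 * m) := by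
        rw [mul_comm _ (N : ℝ), mul_assoc, mul_sum, hIcc, ←
          sum_erase (range N) (f := fun k : ℕ => (2 * Real.sin (π * k / N)) ^ (2 * m)) hzero]
        simp_rw [mul_pow]
    _ = (2 * m).choose m * (N : ℝ) ^ 2 := by
        rw [sum_range_two_mul_sin_pow_two_mul hNm]
        ring

theorem riesz_neg_even_energy_large_N (m N : ℕ) (hm : 0 < m) (hN : 2 ≤ N) (hNm : m < N) :
    (2 : ℝ) ^ (2 * m) * N * ∑ k ∈ Finset.Icc 1 (N - 1),
        (Real.sin (Real.pi * k / N)) ^ (2 * m) =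
      ((2 * m).choose m) * (N : ℝ) ^ 2 :=
  riesz_neg_even_energy_large_N_general m N hm hNm
end

section
/- For every integer N ≥ 2, N · Σ_{k=1}^{N-1} (2 sin(πk/N))^{-2} = N³/12 - N/12. -/
/-! For an `N`-th root of unity `z ≠ 1` one has `∑_{j<N} j z^j = N / (z - 1)`. Applying the
discrete Parseval identity for a primitive `N`-th root of unity `ζ` to the sequence `j ↦ j`
therefore gives `∑_{k=1}^{N-1} N² / ((ζ^k - 1)(ζ^{-k} - 1)) = N ∑ j² - (∑ j)² = N²(N² - 1)/12`,
the term `k = 0` being `(∑ j)²`. For `ζ = e^{2πi/N}` the denominators are `(2 sin(πk/N))²`. -/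

open Finset Real

theorem sum_range_natCast_mul_two {R : Type*} [CommRing R] (n : ℕ) :
    (∑ j ∈ range n, (j : R)) * 2 = n * (n - 1) := by
  induction n with
  | zero => simp
  | succ n ih =>
    rw [sum_range_succ]
    push_cast
    linear_combination ih

theorem sum_range_natCast_sq_mul_six {R : Type*} [CommRing R] (n : ℕ) :
    (∑ j ∈ range n, (j : R) ^ 2) * 6 = n * (n - 1) * (2 * n - 1) := by
  induction n with
  | zero => simp
  | succ n ih =>
    rw [sum_range_succ]
    push_cast
    linear_combination ih

theorem natCast_mul_sum_range_sq_sub_sq_sum_range {R : Type*} [CommRing R] (n : ℕ) :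
    (n * ∑ j ∈ range n, (j : R) ^ 2 - (∑ j ∈ range n, (j : R)) ^ 2) * 12 = n ^ 2 * (n ^ 2 - 1) := by
  linear_combination 2 * (n : R) * sum_range_natCast_sq_mul_six (R := R) n
    - 3 * (2 * ∑ j ∈ range n, (j : R) + n * (n - 1)) * sum_range_natCast_mul_two (R := R) n

theorem sub_one_mul_sum_range_natCast_mul_pow {R : Type*} [CommRing R] (z : R) (n : ℕ) :
    (z - 1) * ∑ j ∈ range n, (j : R) * z ^ j = n * z ^ n - z * ∑ j ∈ range n, z ^ j := by
  induction n with
  | zero => simp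
  | succ n ih =>
    rw [sum_range_succ, sum_range_succ]
    push_cast
    linear_combination ih

section RootOfUnity

variable {K : Type*} [Field K] {ζ z : K} {N : ℕ}

theorem sum_range_natCast_mul_pow_of_pow_eq_one (hz : z ^ N = 1) (hz1 : z ≠ 1) :
    ∑ j ∈ range N, (j : K) * z ^ j = N / (z - 1) := by
  have hgeom : ∑ j ∈ range N, z ^ j = 0 := by simp [geom_sum_eq hz1, hz]
  rw [eq_div_iff (sub_ne_zero.mpr hz1), mul_comm, sub_one_mul_sum_range_natCast_mul_pow, hz,
    hgeom]
  ring

namespace IsPrimitiveRoot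

theorem sum_range_pow_mul_inv_pow (hζ : IsPrimitiveRoot ζ N) {i j : ℕ} (hi : i < N)
    (hj : j < N) : ∑ k ∈ range N, (ζ ^ i * (ζ ^ j)⁻¹) ^ k = if i = j then (N : K) else 0 := by
  have hζ0 : ζ ≠ 0 := hζ.ne_zero (by omega)
  split_ifs with hij
  · simp [hij, hζ0]
  · have hne : ζ ^ i * (ζ ^ j)⁻¹ ≠ 1 := by
      rw [Ne, mul_inv_eq_one₀ (pow_ne_zero _ hζ0)]
      exact fun h => hij (hζ.pow_inj hi hj h)
    have hpow : (ζ ^ i * (ζ ^ j)⁻¹) ^ N = 1 := by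
      rw [mul_pow, inv_pow, pow_right_comm, pow_right_comm ζ j, hζ.pow_eq_one]
      simp
    simp [geom_sum_eq hne, hpow]

theorem sum_range_mul_sum_range_inv (hζ : IsPrimitiveRoot ζ N) (a b : ℕ → K) :
    ∑ k ∈ range N, (∑ i ∈ range N, a i * (ζ ^ k) ^ i) * (∑ j ∈ range N, b j * (ζ ^ k)⁻¹ ^ j)
      = N * ∑ i ∈ range N, a i * b i := by
  have hswap : ∀ k i j : ℕ, (ζ ^ k) ^ i * (ζ ^ k)⁻¹ ^ j = (ζ ^ i * (ζ ^ j)⁻¹) ^ k :=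
    fun k i j => by ring
  calc _ = ∑ i ∈ range N, ∑ j ∈ range N,
        a i * b j * ∑ k ∈ range N, (ζ ^ i * (ζ ^ j)⁻¹) ^ k := by
        simp_rw [sum_mul_sum, mul_sum, ← hswap]
        rw [sum_comm]
        refine sum_congr rfl fun i _ => ?_
        rw [sum_comm]
        refine sum_congr rfl fun j _ => sum_congr rfl fun k _ => by ring
    _ = N * ∑ i ∈ range N, a i * b i := by
        rw [mul_sum]
        refine sum_congr rfl fun i hi => ?_
        rw [mem_range] at hi
        rw [sum_congr rfl fun j hj =>
          congrArg (a i * b j * ·) (hζ.sum_range_pow_mul_inv_pow hi (mem_range.mp hj))]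
        simp only [mul_ite, mul_zero, sum_ite_eq, mem_range, hi, if_true]
        ring

theorem sum_inv_sub_one_mul_inv_sub_one [CharZero K] (hζ : IsPrimitiveRoot ζ N) (hN : N ≠ 0) :
    ∑ k ∈ Icc 1 (N - 1), ((ζ ^ k - 1) * ((ζ ^ k)⁻¹ - 1))⁻¹ = ((N : K) ^ 2 - 1) / 12 := by
  set F : K → K := fun z => ∑ j ∈ range N, (j : K) * z ^ j
  have hterm : ∀ k ∈ Icc 1 (N - 1),
      F (ζ ^ k) * F (ζ ^ k)⁻¹ = N ^ 2 * ((ζ ^ k - 1) * ((ζ ^ k)⁻¹ - 1))⁻¹ := by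
    intro k hk
    rw [mem_Icc] at hk
    have hpow : (ζ ^ k) ^ N = 1 := by rw [pow_right_comm, hζ.pow_eq_one, one_pow]
    have hne : ζ ^ k ≠ 1 := hζ.pow_ne_one_of_pos_of_lt (by omega) (by omega)
    have hpow' : (ζ ^ k)⁻¹ ^ N = 1 := by rw [inv_pow, hpow, inv_one]
    simp only [F, sum_range_natCast_mul_pow_of_pow_eq_one hpow hne,
      sum_range_natCast_mul_pow_of_pow_eq_one hpow' (inv_ne_one.mpr hne)]
    field_simp
  have hparseval := hζ.sum_range_mul_sum_range_inv (fun j => (j : K)) (fun j => (j : K))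
  rw [sum_range_eq_add_Ico _ (Nat.pos_of_ne_zero hN), ← Icc_sub_one_right_eq_Ico_of_not_isMin
    (by simpa using hN), sum_congr rfl hterm, ← mul_sum] at hparseval
  simp only [pow_zero, inv_one, one_pow, mul_one, ← sq] at hparseval
  have hN' : (N : K) ≠ 0 := Nat.cast_ne_zero.mpr hN
  rw [eq_div_iff (by norm_num)]
  refine mul_left_cancel₀ (pow_ne_zero 2 hN') ?_
  linear_combination 12 * hparseval + natCast_mul_sum_range_sq_sub_sq_sum_range (R := K) N

end IsPrimitiveRoot
end RootOfUnity

theorem Complex.exp_two_mul_I_sub_one_mul_inv_sub_one (x : ℝ) :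
    (exp (2 * x * I) - 1) * ((exp (2 * x * I))⁻¹ - 1) = ((2 * Real.sin x) ^ 2 : ℝ) := by
  rw [← exp_neg, ← neg_mul, exp_mul_I, exp_mul_I, cos_neg, sin_neg, cos_two_mul, sin_two_mul]
  push_cast
  linear_combination (4 * cos (x : ℂ) ^ 2 - 4) * sin_sq_add_cos_sq (x : ℂ)
    - 4 * sin (x : ℂ) ^ 2 * cos (x : ℂ) ^ 2 * I_sq

theorem riesz_two_energy_general (N : ℕ) :
    (N : ℝ) * ∑ k ∈ Finset.Icc 1 (N - 1),
        ((2 * Real.sin (Real.pi * k / N)) ^ 2)⁻¹ =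
      (N : ℝ) ^ 3 / 12 - (N : ℝ) / 12 := by
  obtain rfl | hN := eq_or_ne N 0
  · simp
  have hsum : ∑ k ∈ Icc 1 (N - 1), ((2 * Real.sin (π * k / N)) ^ 2)⁻¹
      = ((N : ℝ) ^ 2 - 1) / 12 := by
    apply Complex.ofReal_injective
    rw [Complex.ofReal_sum, Complex.ofReal_div, Complex.ofReal_sub, Complex.ofReal_pow,
      Complex.ofReal_natCast, Complex.ofReal_one, Complex.ofReal_ofNat,
      ← (Complex.isPrimitiveRoot_exp N hN).sum_inv_sub_one_mul_inv_sub_one hN]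
    refine sum_congr rfl fun k _ => ?_
    have harg : (k : ℂ) * (2 * π * Complex.I / N) = 2 * ((π * k / N : ℝ) : ℂ) * Complex.I := by
      push_cast
      ring
    rw [Complex.ofReal_inv, ← Complex.exp_nat_mul, harg,
      Complex.exp_two_mul_I_sub_one_mul_inv_sub_one]
  rw [hsum]
  ring

theorem riesz_two_energy (N : ℕ) (hN : 2 ≤ N) :
    (N : ℝ) * ∑ k ∈ Finset.Icc 1 (N - 1),
        ((2 * Real.sin (Real.pi * k / N)) ^ 2)⁻¹ =
      (N : ℝ) ^ 3 / 12 - (N : ℝ) / 12 :=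
  riesz_two_energy_general N
end

section
/- For 0 ≤ r < 1 and an integer N ≥ 2, N · Σ_{k=1}^{N-1} (1 - 2r·cos(2πk/N) + r²)^{-1} = N²·(1 + r^N)/((1 - r²)(1 - r^N)) - N/(1-r)². -/
/-!
Factor `1 - 2 r cos θ + r² = (1 - r e^{iθ}) (1 - r e^{-iθ})` and split the reciprocal by partial
fractions into `((1 - r e^{iθ})⁻¹ + (1 - r e^{-iθ})⁻¹ - 1) / (1 - r²)`. At the angles `θ = 2πk/N`
the exponentials are the powers of a primitive `N`-th root of unity `ζ` (or of `ζ⁻¹`), and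
`∑ₖ (1 - x ζ^k)⁻¹ = N / (1 - x^N)`: expanding each term as a geometric series of length `N`, only
the constant terms survive the sum over `k`. The term `k = 0` of the full sum is `(1 - r)⁻²`.
-/

open Finset Real

theorem mul_pow_pow_of_pow_eq_one {M : Type*} [CommMonoid M] {ζ : M} {N : ℕ} (hζ : ζ ^ N = 1)
    (x : M) (k : ℕ) : (x * ζ ^ k) ^ N = x ^ N := by
  rw [mul_pow, ← pow_mul, mul_comm k, pow_mul, hζ, one_pow, mul_one]

theorem one_sub_mul_pow_ne_zero_of_pow_eq_one {R : Type*} [CommRing R] {ζ : R} {N : ℕ}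
    (hζ : ζ ^ N = 1) {x : R} (hx : x ^ N ≠ 1) (k : ℕ) : 1 - x * ζ ^ k ≠ 0 :=
  sub_ne_zero.mpr fun h => hx (by rw [← mul_pow_pow_of_pow_eq_one hζ x k, ← h, one_pow])

namespace IsPrimitiveRoot

variable {K : Type*} [Field K] {ζ : K} {N : ℕ}

theorem sum_pow_pow_eq_zero (hζ : IsPrimitiveRoot ζ N) {j : ℕ} (hj : ¬ N ∣ j) :
    ∑ k ∈ range N, (ζ ^ j) ^ k = 0 := by
  have hζj : ζ ^ j ≠ 1 := fun h => hj (hζ.dvd_of_pow_eq_one j h)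
  rw [geom_sum_eq hζj, ← pow_mul, mul_comm, pow_mul, hζ.pow_eq_one, one_pow, sub_self, zero_div]

theorem sum_inv_one_sub_mul_pow (hζ : IsPrimitiveRoot ζ N) {x : K} (hx : x ^ N ≠ 1) :
    ∑ k ∈ range N, (1 - x * ζ ^ k)⁻¹ = N / (1 - x ^ N) := by
  have geom (k : ℕ) :
      (1 - x * ζ ^ k)⁻¹ = (∑ j ∈ range N, x ^ j * (ζ ^ j) ^ k) / (1 - x ^ N) := by
    have hxk : x * ζ ^ k ≠ 1 :=
      fun h => hx (by rw [← mul_pow_pow_of_pow_eq_one hζ.pow_eq_one x k, h, one_pow])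
    have hxk' : x * ζ ^ k - 1 ≠ 0 := sub_ne_zero.mpr hxk
    have hxN : 1 - x ^ N ≠ 0 := sub_ne_zero.mpr (Ne.symm hx)
    calc (1 - x * ζ ^ k)⁻¹ = (∑ j ∈ range N, (x * ζ ^ k) ^ j) / (1 - x ^ N) := by
          rw [geom_sum_eq hxk, mul_pow_pow_of_pow_eq_one hζ.pow_eq_one]
          field_simp
          ring
      _ = _ := by congr 1; exact sum_congr rfl fun j _ => by ring
  have hsingle : ∑ j ∈ range N, x ^ j * ∑ k ∈ range N, (ζ ^ j) ^ k = N := by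
    rw [sum_eq_single 0]
    · simp
    · intro j hj hj0
      have hNj : ¬ N ∣ j := Nat.not_dvd_of_pos_of_lt (Nat.pos_of_ne_zero hj0) (mem_range.mp hj)
      rw [hζ.sum_pow_pow_eq_zero hNj, mul_zero]
    · intro h
      rw [mem_range, not_lt, Nat.le_zero] at h
      simp [h]
  rw [sum_congr rfl fun k _ => geom k, ← sum_div, sum_comm]
  simp_rw [← mul_sum]
  rw [hsingle]

end IsPrimitiveRoot

theorem Complex.one_sub_two_mul_cos_add_sq (r θ : ℂ) :
    1 - 2 * r * Complex.cos θ + r ^ 2 =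
      (1 - r * Complex.exp (θ * Complex.I)) * (1 - r * Complex.exp (-(θ * Complex.I))) := by
  have hcos := Complex.two_cos θ
  have hmul : Complex.exp (θ * Complex.I) * Complex.exp (-(θ * Complex.I)) = 1 := by
    rw [← Complex.exp_add, add_neg_cancel, Complex.exp_zero]
  rw [neg_mul] at hcos
  linear_combination (-r) * hcos - r ^ 2 * hmul

theorem inv_one_sub_mul_one_sub {K : Type*} [Field K] {a b : K} (ha : 1 - a ≠ 0)
    (hb : 1 - b ≠ 0) (hab : 1 - a * b ≠ 0) :
    ((1 - a) * (1 - b))⁻¹ = ((1 - a)⁻¹ + (1 - b)⁻¹ - 1) / (1 - a * b) := by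
  field_simp
  ring

theorem sum_inv_one_sub_two_mul_cos_add_sq {r : ℝ} {N : ℕ} (hr2 : r ^ 2 ≠ 1)
    (hrN : r ^ N ≠ 1) :
    ∑ k ∈ range N, (1 - 2 * r * cos (2 * π * k / N) + r ^ 2)⁻¹ =
      N * (1 + r ^ N) / ((1 - r ^ 2) * (1 - r ^ N)) := by
  have hN : N ≠ 0 := by rintro rfl; simp at hrN
  set ζ := Complex.exp (2 * π * Complex.I / N)
  have hζ : IsPrimitiveRoot ζ N := Complex.isPrimitiveRoot_exp N hN
  have hrN' : (r : ℂ) ^ N ≠ 1 := by exact_mod_cast hrN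
  have hr2' : 1 - (r : ℂ) ^ 2 ≠ 0 := sub_ne_zero.mpr (by exact_mod_cast hr2.symm)
  have hfactor (k : ℕ) : 1 - 2 * r * Complex.cos (2 * π * k / N) + (r : ℂ) ^ 2 =
      (1 - r * ζ ^ k) * (1 - r * ζ⁻¹ ^ k) := by
    rw [Complex.one_sub_two_mul_cos_add_sq, inv_pow, ← Complex.exp_nat_mul, ← Complex.exp_neg]
    congr 4 <;> ring
  have hpartial (k : ℕ) : ((1 - r * ζ ^ k) * (1 - r * ζ⁻¹ ^ k))⁻¹ =
      ((1 - r * ζ ^ k)⁻¹ + (1 - r * ζ⁻¹ ^ k)⁻¹ - 1) / (1 - (r : ℂ) ^ 2) := by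
    have hprod : r * ζ ^ k * (r * ζ⁻¹ ^ k) = (r : ℂ) ^ 2 := by
      have := hζ.ne_zero hN
      rw [inv_pow]
      field_simp
    rw [inv_one_sub_mul_one_sub (one_sub_mul_pow_ne_zero_of_pow_eq_one hζ.pow_eq_one hrN' k)
      (one_sub_mul_pow_ne_zero_of_pow_eq_one hζ.inv.pow_eq_one hrN' k) (by rwa [hprod]), hprod]
  apply Complex.ofReal_injective
  push_cast
  rw [sum_congr rfl fun k _ => by rw [hfactor, hpartial], ← sum_div, sum_sub_distrib,
    sum_add_distrib, hζ.sum_inv_one_sub_mul_pow hrN', hζ.inv.sum_inv_one_sub_mul_pow hrN',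
    sum_const, card_range, nsmul_one]
  field_simp
  ring

theorem modified_two_energy (N : ℕ) (hN : 2 ≤ N) (r : ℝ) (hr0 : 0 ≤ r) (hr1 : r < 1) :
    (N : ℝ) * ∑ k ∈ Finset.Icc 1 (N - 1),
        (1 - 2 * r * Real.cos (2 * Real.pi * k / N) + r ^ 2)⁻¹ =
      (N : ℝ) ^ 2 * (1 + r ^ N) / ((1 - r ^ 2) * (1 - r ^ N)) -
        (N : ℝ) / (1 - r) ^ 2 := by
  have hr2 : r ^ 2 < 1 := pow_lt_one₀ hr0 hr1 two_ne_zero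
  have hrN : r ^ N < 1 := pow_lt_one₀ hr0 hr1 (by omega)
  have hsum := sum_inv_one_sub_two_mul_cos_add_sq hr2.ne hrN.ne
  obtain ⟨M, rfl⟩ : ∃ M, N = M + 1 := ⟨N - 1, by omega⟩
  rw [range_eq_Ico, sum_eq_sum_Ico_succ_bot M.add_one_pos, zero_add,
    Ico_add_one_right_eq_Icc, Nat.cast_zero, mul_zero, zero_div, cos_zero,
    show 1 - 2 * r * 1 + r ^ 2 = (1 - r) ^ 2 by ring] at hsum
  rw [Nat.add_sub_cancel, eq_sub_of_add_eq' hsum]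
  have : 1 - r ≠ 0 := by linarith
  field_simp
end

section
/- For positive integers n ≥ k, the partial Bell polynomial B_{n,k}(1/2, 1/3, 1/4, …) evaluated at x_m = 1/(m+1) equals (n!/(k!(n+k)!)) · H_{n+k}(n,k), where H_{n+k}(n,k) = Σ over (n₁,…,n_k) with each n_i ≥ 2 and n₁+⋯+n_k = n+k of the multinomial coefficient (n+k)!/(n₁!⋯n_k!). -/
/-!
The series `Σ_{m≥1} tᵐ/(m+1)!` is `(eᵗ - 1 - t)/t`, so the coefficient of `tⁿ` in its `k`-th power
is the coefficient of `tⁿ⁺ᵏ` in `(eᵗ - 1 - t)ᵏ`, namely the sum of `1/(n₁!⋯n_k!)` over the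
compositions of `n + k` into `k` parts `≥ 2`.
-/

open Finset PowerSeries

namespace PowerSeries

theorem coeff_pow_eq_sum_piAntidiag {R : Type*} [CommSemiring R] (φ : R⟦X⟧) (k N : ℕ) :
    coeff N (φ ^ k) = ∑ f ∈ piAntidiag (univ : Finset (Fin k)) N, ∏ i, coeff (f i) φ := by
  classical
  rw [← Fin.prod_const, coeff_prod, finsuppAntidiag, sum_map]
  exact sum_attach (piAntidiag univ N) fun f => ∏ i, coeff (f i) φ

theorem coeff_pow_eq_sum_of_coeff_eq_zero {R : Type*} [CommSemiring R] {φ : R⟦X⟧} {r : ℕ}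
    (hφ : ∀ m < r, coeff m φ = 0) (k N : ℕ) :
    coeff N (φ ^ k) = ∑ f ∈ (Fintype.piFinset fun _ : Fin k => Icc r N).filter
      (fun f => ∑ i, f i = N), ∏ i, coeff (f i) φ := by
  rw [coeff_pow_eq_sum_piAntidiag]
  symm
  refine sum_subset (fun f hf => ?_) (fun f hf hf' => ?_)
  · simp_all
  · obtain ⟨hsum, -⟩ := mem_piAntidiag.mp hf
    have hle (i : Fin k) : f i ≤ N := hsum ▸ single_le_sum (by simp) (mem_univ i)
    obtain ⟨i, hi⟩ : ∃ i, f i < r := by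
      by_contra! h
      exact hf' (by simp_all)
    exact prod_eq_zero (mem_univ i) (hφ _ hi)

theorem coeff_exp_sub_one_sub_X {A : Type*} [Ring A] [Algebra ℚ A] (m : ℕ) :
    coeff m (exp A - 1 - X) = if m < 2 then 0 else algebraMap ℚ A (1 / m.factorial) := by
  rcases m with _ | _ | m <;> simp [coeff_exp, coeff_one, coeff_X]

theorem X_mul_mk_inv_factorial_succ {K : Type*} [Field K] [CharZero K] :
    X * mk (fun m : ℕ => if m = 0 then (0 : K) else (1 / ((m : K) + 1)) / m.factorial) =
      exp K - 1 - X := by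
  ext m
  rcases m with _ | _ | m
  · simp
  · simp [coeff_exp_sub_one_sub_X]
  · rw [coeff_succ_X_mul, coeff_mk, coeff_exp_sub_one_sub_X, if_neg (by omega),
      if_neg (by omega), Nat.factorial_succ (m + 1)]
    push_cast
    field_simp

end PowerSeries

theorem bell_at_reciprocals_general (n k : ℕ)
    (B : ℕ → ℕ → ℝ)
    (hB : ∀ j : ℕ,
      (PowerSeries.mk fun i : ℕ => B i j / (i.factorial : ℝ)) =
        ((j.factorial : ℝ))⁻¹ •
          (PowerSeries.mk fun m : ℕ =>
            if m = 0 then (0 : ℝ) else (1 / ((m : ℝ) + 1)) / (m.factorial : ℝ)) ^ j) :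
    B n k =
      ((n.factorial : ℝ) / ((k.factorial : ℝ) * ((n + k).factorial : ℝ))) *
        ∑ f ∈ (Fintype.piFinset fun _ : Fin k => Finset.Icc 2 (n + k)).filter
            (fun f => ∑ i, f i = n + k),
          ((n + k).factorial : ℝ) / ∏ i, ((f i).factorial : ℝ) := by
  set φ : ℝ⟦X⟧ := mk fun m : ℕ =>
    if m = 0 then (0 : ℝ) else (1 / ((m : ℝ) + 1)) / (m.factorial : ℝ)
  set T := (Fintype.piFinset fun _ : Fin k => Icc 2 (n + k)).filter (fun f => ∑ i, f i = n + k)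
  have hψ (m : ℕ) (hm : m < 2) : coeff m (exp ℝ - 1 - X) = 0 := by
    simp [coeff_exp_sub_one_sub_X, hm]
  have hcoeff : coeff n (φ ^ k) = ∑ f ∈ T, ∏ i, ((f i).factorial : ℝ)⁻¹ :=
    calc coeff n (φ ^ k) = coeff (n + k) ((X * φ) ^ k) := by rw [mul_pow, coeff_X_pow_mul]
      _ = ∑ f ∈ T, ∏ i, coeff (f i) (exp ℝ - 1 - X) := by
        rw [X_mul_mk_inv_factorial_succ, coeff_pow_eq_sum_of_coeff_eq_zero hψ]
      _ = ∑ f ∈ T, ∏ i, ((f i).factorial : ℝ)⁻¹ := by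
        refine sum_congr rfl fun f hf => prod_congr rfl fun i _ => ?_
        have : 2 ≤ f i := (mem_Icc.mp (Fintype.mem_piFinset.mp (mem_filter.mp hf).1 i)).1
        simp [coeff_exp_sub_one_sub_X, not_lt.mpr this]
  have hBnk := congrArg (coeff n) (hB k)
  rw [coeff_mk, map_smul, hcoeff, smul_eq_mul, div_eq_iff (by positivity)] at hBnk
  rw [hBnk, mul_sum, sum_mul, mul_sum]
  refine sum_congr rfl fun f _ => ?_
  rw [prod_inv_distrib]
  field_simp

/-- The partial Bell polynomial `B_{n,k}(1/2, 1/3, 1/4, …)` (at `x_m = 1/(m+1)`), defined by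
`Σ_n B_{n,k} tⁿ/n! = (1/k!) (Σ_{m≥1} x_m tᵐ/m!)ᵏ`, equals
`(n!/(k!(n+k)!)) · H_{n+k}(n,k)` where `H_{n+k}(n,k)` is the sum of multinomial coefficients
`(n+k)!/(n₁!⋯n_k!)` over compositions `n₁+⋯+n_k = n+k` with each part `≥ 2`. -/
theorem bell_at_reciprocals (n k : ℕ) (hk : 0 < k) (hkn : k ≤ n)
    (B : ℕ → ℕ → ℝ)
    (hB : ∀ j : ℕ,
      (PowerSeries.mk fun i : ℕ => B i j / (i.factorial : ℝ)) =
        ((j.factorial : ℝ))⁻¹ •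
          (PowerSeries.mk fun m : ℕ =>
            if m = 0 then (0 : ℝ) else (1 / ((m : ℝ) + 1)) / (m.factorial : ℝ)) ^ j) :
    B n k =
      ((n.factorial : ℝ) / ((k.factorial : ℝ) * ((n + k).factorial : ℝ))) *
        ∑ f ∈ (Fintype.piFinset fun _ : Fin k => Finset.Icc 2 (n + k)).filter
            (fun f => ∑ i, f i = n + k),
          ((n + k).factorial : ℝ) / ∏ i, ((f i).factorial : ℝ) :=
  bell_at_reciprocals_general n k B hB
end

section
/- For a positive integer n and |z| < 1: Li_{-n}(z) = [n! + Σ_{ℓ=1}^{n} (-1)^ℓ b(n,ℓ)(1-z)^ℓ] / (1-z)^{n+1}, where b(n,ℓ) = Σ_{j=0}^{n-ℓ} A(n,j)·C(n-j, ℓ) with A(n,j) the Eulerian numbers. -/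
/-!
Multiplying `∑ k ^ n * z ^ k` by the polynomial `(1 - z) ^ (n + 1)` (a Cauchy product) leaves
the coefficients `c m = ∑_{i ≤ m} (-1) ^ i * C(n + 1, i) * (m - i) ^ n`. Such an alternating sum
is an `(n + 1)`-st forward difference of `x ↦ x ^ n`, so it vanishes for `m > n`; and since the
full alternating sum vanishes at every `m`, reading it backwards gives the reflection
`c m = A(n, n - m)`. Hence the numerator is `∑_j A(n, j) z ^ (n - j)`, and expanding
`z = (z - 1) + 1` binomially turns it into `∑_ℓ (-1) ^ ℓ b(n, ℓ) (1 - z) ^ ℓ`. Finally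
`b(n, 0) = ∑_j A(n, j) = ∑_m c m`, and by Pascal's rule these partial sums telescope to the
`n`-th forward difference of `x ↦ x ^ n` at `0`, i.e. `n!`.
-/

open Finset

/-- The Eulerian number `A(n,j)`. -/
def eulerianNumber (n j : ℕ) : ℤ :=
  ∑ i ∈ Finset.range (j + 1), (-1) ^ i * ((n + 1).choose i : ℤ) * ((j + 1 - i : ℕ) : ℤ) ^ n

/-- `b(n,ℓ) = Σ_{j=0}^{n-ℓ} A(n,j) C(n-j,ℓ)`. -/
def bCoeff (n ℓ : ℕ) : ℤ :=
  ∑ j ∈ Finset.range (n - ℓ + 1), eulerianNumber n j * ((n - j).choose ℓ : ℤ)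

theorem fwdDiff_iter_sub_eq_sum {G : Type*} [AddCommGroup G] (f : ℤ → G) (p : ℕ) (y : ℤ) :
    (fwdDiff 1)^[p] f (y - p) = ∑ i ∈ range (p + 1), ((-1) ^ i * p.choose i : ℤ) • f (y - i) := by
  rw [fwdDiff_iter_eq_sum_shift, ← sum_range_reflect]
  refine sum_congr rfl fun i hi => ?_
  have hip : i ≤ p := mem_range_succ_iff.mp hi
  rw [Nat.add_sub_cancel, Nat.sub_sub_self hip, Nat.choose_symm hip, nsmul_one, Nat.cast_sub hip,
    sub_add_sub_cancel]

/-- The coefficient of `z ^ m` in `(1 - z) ^ p * ∑ k, k ^ n * z ^ k`. -/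
def oneSubPowMulCoeff (p n m : ℕ) : ℤ :=
  ∑ i ∈ range (m + 1), (-1) ^ i * (p.choose i : ℤ) * ((m - i : ℕ) : ℤ) ^ n

theorem oneSubPowMulCoeff_eq_fwdDiff_iter {p m : ℕ} (n : ℕ) (h : p ≤ m) :
    oneSubPowMulCoeff p n m = (fwdDiff 1)^[p] (fun x : ℤ => x ^ n) (m - p) := by
  rw [fwdDiff_iter_sub_eq_sum, oneSubPowMulCoeff,
    ← sum_subset (range_subset_range.mpr (Nat.succ_le_succ h))]
  · refine sum_congr rfl fun i hi => ?_
    rw [smul_eq_mul, Nat.cast_sub ((mem_range_succ_iff.mp hi).trans h)]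
  · intro i _ hi
    rw [Nat.choose_eq_zero_of_lt (by simpa using hi)]
    simp

theorem oneSubPowMulCoeff_eq_zero {p n m : ℕ} (hnp : n < p) (hpm : p ≤ m) :
    oneSubPowMulCoeff p n m = 0 := by
  rw [oneSubPowMulCoeff_eq_fwdDiff_iter n hpm, fwdDiff_iter_pow_eq_zero_of_lt hnp, Pi.zero_apply]

theorem oneSubPowMulCoeff_self (n : ℕ) : oneSubPowMulCoeff n n n = n.factorial := by
  rw [oneSubPowMulCoeff_eq_fwdDiff_iter n le_rfl, fwdDiff_iter_eq_factorial, Pi.natCast_apply]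

theorem oneSubPowMulCoeff_succ_succ (p n m : ℕ) :
    oneSubPowMulCoeff (p + 1) n (m + 1) =
      oneSubPowMulCoeff p n (m + 1) - oneSubPowMulCoeff p n m := by
  simp only [oneSubPowMulCoeff, sum_range_succ' _ (m + 1), Nat.choose_succ_succ', Nat.succ_sub_succ,
    Nat.choose_zero_right]
  push_cast
  simp only [pow_succ, mul_add, add_mul, sum_add_distrib, mul_neg, neg_mul, sum_neg_distrib,
    mul_one]
  abel

theorem sum_range_oneSubPowMulCoeff_succ (p n M : ℕ) :
    ∑ m ∈ range (M + 1), oneSubPowMulCoeff (p + 1) n m = oneSubPowMulCoeff p n M := by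
  induction M with
  | zero => simp [oneSubPowMulCoeff]
  | succ M ih => rw [sum_range_succ, ih, oneSubPowMulCoeff_succ_succ]; ring

theorem oneSubPowMulCoeff_eq_eulerianNumber {n m : ℕ} (h : m ≤ n) :
    oneSubPowMulCoeff (n + 1) n m = eulerianNumber n (n - m) := by
  set g : ℕ → ℤ := fun i => (-1) ^ i * ((n + 1).choose i : ℤ) * ((m : ℤ) - i) ^ n
  have hvanish :
      ∑ i ∈ range (m + 1), g i + ∑ x ∈ range (n - m + 1), g (m + 1 + x) = 0 := by
    have := fwdDiff_iter_sub_eq_sum (fun x : ℤ => x ^ n) (n + 1) m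
    rw [fwdDiff_iter_pow_eq_zero_of_lt (Nat.lt_succ_self n),
      show n + 1 + 1 = (m + 1) + (n - m + 1) by omega, sum_range_add] at this
    simpa [g, mul_assoc] using this.symm
  calc oneSubPowMulCoeff (n + 1) n m
      = ∑ i ∈ range (m + 1), g i := sum_congr rfl fun i hi => by
        rw [Nat.cast_sub (mem_range_succ_iff.mp hi)]
    _ = -∑ x ∈ range (n - m + 1), g (m + 1 + x) := eq_neg_of_add_eq_zero_left hvanish
    _ = ∑ x ∈ range (n - m + 1), (-1) ^ (n - m - x) * ((n + 1).choose (n - m - x) : ℤ) *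
          ((n - m + 1 - (n - m - x) : ℕ) : ℤ) ^ n := by
        rw [← sum_neg_distrib]
        refine sum_congr rfl fun x hx => ?_
        obtain ⟨d, rfl⟩ : ∃ d, n = m + x + d := ⟨n - m - x, by rw [mem_range] at hx; omega⟩
        have hsign : (-1 : ℤ) ^ (m + 1 + x) * (-1) ^ (m + x + d) = -(-1) ^ d := by
          rw [← pow_add, show m + 1 + x + (m + x + d) = 2 * (m + x) + d + 1 by ring, pow_succ,
            pow_add, pow_mul]
          norm_num
        simp only [g]
        rw [Nat.choose_symm_of_eq_add (show m + x + d + 1 = m + 1 + x + d by ring),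
          show m + x + d - m - x = d by omega, show m + x + d - m + 1 - d = x + 1 by omega]
        push_cast
        rw [show (m : ℤ) - (m + 1 + x) = -1 * (x + 1) by ring, mul_pow]
        linear_combination -((m + x + d + 1).choose d : ℤ) * ((x : ℤ) + 1) ^ (m + x + d) * hsign
    _ = eulerianNumber n (n - m) := by
        conv_rhs => rw [eulerianNumber, ← sum_range_reflect]
        simp only [Nat.add_sub_cancel]

theorem sum_range_eulerianNumber (n : ℕ) :
    ∑ j ∈ range (n + 1), eulerianNumber n j = n.factorial := by
  rw [← sum_range_reflect, ← oneSubPowMulCoeff_self, ← sum_range_oneSubPowMulCoeff_succ]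
  refine sum_congr rfl fun m hm => ?_
  rw [Nat.add_sub_cancel, oneSubPowMulCoeff_eq_eulerianNumber (mem_range_succ_iff.mp hm)]

theorem bCoeff_zero (n : ℕ) : bCoeff n 0 = n.factorial := by
  simp [bCoeff, sum_range_eulerianNumber]

theorem sum_bCoeff_mul_one_sub_pow {R : Type*} [CommRing R] (n : ℕ) (z : R) :
    ∑ ℓ ∈ range (n + 1), (-1) ^ ℓ * (bCoeff n ℓ : R) * (1 - z) ^ ℓ =
      ∑ j ∈ range (n + 1), (eulerianNumber n j : R) * z ^ (n - j) := by
  calc ∑ ℓ ∈ range (n + 1), (-1) ^ ℓ * (bCoeff n ℓ : R) * (1 - z) ^ ℓ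
      = ∑ ℓ ∈ range (n + 1), ∑ j ∈ range (n - ℓ + 1),
          (eulerianNumber n j : R) * ((z - 1) ^ ℓ * ((n - j).choose ℓ : R)) := by
        refine sum_congr rfl fun ℓ _ => ?_
        rw [bCoeff, Int.cast_sum, mul_sum, sum_mul]
        refine sum_congr rfl fun j _ => ?_
        rw [show z - 1 = -1 * (1 - z) by ring, mul_pow]
        push_cast
        ring
    _ = ∑ j ∈ range (n + 1), ∑ ℓ ∈ range (n - j + 1),
          (eulerianNumber n j : R) * ((z - 1) ^ ℓ * ((n - j).choose ℓ : R)) :=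
        sum_comm' fun ℓ j => by simp only [mem_range]; omega
    _ = ∑ j ∈ range (n + 1), (eulerianNumber n j : R) * z ^ (n - j) := by
        refine sum_congr rfl fun j _ => ?_
        have hbinom := add_pow (z - 1) 1 (n - j)
        simp only [sub_add_cancel, one_pow, mul_one] at hbinom
        rw [← mul_sum, hbinom]

theorem hasSum_neg_one_pow_mul_choose_mul_pow {R : Type*} [CommRing R] [TopologicalSpace R]
    (p : ℕ) (z : R) :
    HasSum (fun i => (-1) ^ i * (p.choose i : R) * z ^ i) ((1 - z) ^ p) := by
  have hbinom : (1 - z) ^ p = ∑ i ∈ range (p + 1), (-1) ^ i * (p.choose i : R) * z ^ i := by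
    rw [sub_eq_neg_add, add_pow]
    refine sum_congr rfl fun i _ => ?_
    rw [neg_pow]
    ring
  rw [hbinom]
  refine hasSum_sum_of_ne_finset_zero fun i hi => ?_
  rw [Nat.choose_eq_zero_of_lt (by simpa using hi)]
  simp

theorem one_sub_pow_mul_tsum_pow_mul_geometric {R : Type*} [NormedCommRing R] [CompleteSpace R]
    (n : ℕ) {z : R} (hz : ‖z‖ < 1) :
    (1 - z) ^ (n + 1) * ∑' k : ℕ, (k : R) ^ n * z ^ k =
      ∑ m ∈ range (n + 1), (oneSubPowMulCoeff (n + 1) n m : R) * z ^ m := by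
  set a : ℕ → R := fun i => (-1) ^ i * ((n + 1).choose i : R) * z ^ i
  have ha := hasSum_neg_one_pow_mul_choose_mul_pow (n + 1) z
  have ha_norm : Summable fun i => ‖a i‖ :=
    summable_of_ne_finset_zero (s := range (n + 2)) fun i hi => by
      simp only [mem_range, not_lt] at hi
      simp [a, Nat.choose_eq_zero_of_lt hi]
  have hcauchy := hasSum_sum_range_mul_of_summable_norm ha_norm
    (summable_norm_pow_mul_geometric_of_norm_lt_one n hz)
  have hcoeff : ∀ m, ∑ i ∈ range (m + 1), a i * (((m - i : ℕ) : R) ^ n * z ^ (m - i)) =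
      (oneSubPowMulCoeff (n + 1) n m : R) * z ^ m := fun m => by
    rw [oneSubPowMulCoeff, Int.cast_sum, sum_mul]
    refine sum_congr rfl fun i hi => ?_
    rw [← pow_mul_pow_sub z (mem_range_succ_iff.mp hi)]
    push_cast
    ring
  simp only [hcoeff] at hcauchy
  rw [← ha.tsum_eq]
  exact hcauchy.unique <| hasSum_sum_of_ne_finset_zero (s := range (n + 1)) fun m hm => by
    rw [oneSubPowMulCoeff_eq_zero n.lt_succ_self (by simpa using hm), Int.cast_zero, zero_mul]

theorem factorial_add_sum_bCoeff_mul_one_sub_pow {R : Type*} [CommRing R] (n : ℕ) (z : R) :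
    (n.factorial : R) + ∑ ℓ ∈ Icc 1 n, (-1) ^ ℓ * (bCoeff n ℓ : R) * (1 - z) ^ ℓ =
      ∑ m ∈ range (n + 1), (oneSubPowMulCoeff (n + 1) n m : R) * z ^ m := by
  calc (n.factorial : R) + ∑ ℓ ∈ Icc 1 n, (-1) ^ ℓ * (bCoeff n ℓ : R) * (1 - z) ^ ℓ
      = ∑ ℓ ∈ range (n + 1), (-1) ^ ℓ * (bCoeff n ℓ : R) * (1 - z) ^ ℓ := by
        rw [range_eq_Ico, sum_eq_sum_Ico_succ_bot (Nat.succ_pos n), zero_add, Nat.succ_eq_add_one,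
          Ico_add_one_right_eq_Icc, bCoeff_zero]
        simp
    _ = ∑ j ∈ range (n + 1), (eulerianNumber n j : R) * z ^ (n - j) :=
        sum_bCoeff_mul_one_sub_pow n z
    _ = ∑ m ∈ range (n + 1), (oneSubPowMulCoeff (n + 1) n m : R) * z ^ m := by
        rw [← sum_range_reflect]
        refine sum_congr rfl fun m hm => ?_
        have hmn : m ≤ n := mem_range_succ_iff.mp hm
        rw [Nat.add_sub_cancel, Nat.sub_sub_self hmn, oneSubPowMulCoeff_eq_eulerianNumber hmn]

theorem polylog_neg_int_expansion_general (n : ℕ) (z : ℝ) (hz : |z| < 1) :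
    HasSum (fun k : ℕ => (k : ℝ) ^ n * z ^ k)
      (((n.factorial : ℝ) +
          ∑ ℓ ∈ Finset.Icc 1 n, (-1 : ℝ) ^ ℓ * (bCoeff n ℓ : ℝ) * (1 - z) ^ ℓ) /
        (1 - z) ^ (n + 1)) := by
  have hz1 : (1 - z) ^ (n + 1) ≠ 0 := pow_ne_zero _ (sub_ne_zero.mpr (abs_lt.mp hz).2.ne')
  rw [factorial_add_sum_bCoeff_mul_one_sub_pow, ← one_sub_pow_mul_tsum_pow_mul_geometric n hz,
    mul_div_cancel_left₀ _ hz1]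
  exact (summable_pow_mul_geometric_of_norm_lt_one n hz).hasSum

/-- `Li_{-n}(z) = [n! + Σ_{ℓ=1}^n (-1)^ℓ b(n,ℓ)(1-z)^ℓ]/(1-z)^{n+1}` for `|z| < 1`. -/
theorem polylog_neg_int_expansion (n : ℕ) (hn : 0 < n) (z : ℝ) (hz : |z| < 1) :
    HasSum (fun k : ℕ => (k : ℝ) ^ n * z ^ k)
      (((n.factorial : ℝ) +
          ∑ ℓ ∈ Finset.Icc 1 n, (-1 : ℝ) ^ ℓ * (bCoeff n ℓ : ℝ) * (1 - z) ^ ℓ) /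
        (1 - z) ^ (n + 1)) :=
  polylog_neg_int_expansion_general n z hz
end

section
/- Let k be a nonnegative integer and a, b complex numbers. For |z| < 1, Σ_{ν=-∞}^{∞} (|ν|·a + b)_k · z^{|ν|} = -(b)_k + 2·Σ_{q=0}^{k} g(k,q;a,b)·(1-z)^{-q-1}, where g(k,q;a,b) = Σ_{p=0}^{k-q} (-1)^p · s(k,p+q;b) · b(p+q,p) · a^{p+q}, with s(n,ℓ;y) = Σ_{m=ℓ}^{n} C(m,ℓ)·s(n,m)·(y+n-1)^{m-ℓ} (s(n,m) signed Stirling numbers of the first kind) and b(n,ℓ) = Σ_{j=0}^{n-ℓ} A(n,j)·C(n-j,ℓ) (A(n,j) Eulerian numbers). -/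
open Finset

/-- `s(n,ℓ;y) = Σ_{m=ℓ}^n C(m,ℓ) s(n,m) (y+n-1)^{m-ℓ}` with `s(n,m)` the signed Stirling
numbers of the first kind (coefficients of `x(x-1)⋯(x-n+1)`). -/
noncomputable def stirlingShift (n ℓ : ℕ) (y : ℂ) : ℂ :=
  ∑ m ∈ Finset.Icc ℓ n,
    (m.choose ℓ : ℂ) * (((descPochhammer ℤ n).coeff m : ℤ) : ℂ) * (y + n - 1) ^ (m - ℓ)

/-- `g(k,q;a,b) = Σ_{p=0}^{k-q} (-1)^p s(k,p+q;b) b(p+q,p) a^{p+q}`. -/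
noncomputable def gCoeff (k q : ℕ) (a b : ℂ) : ℂ :=
  ∑ p ∈ Finset.range (k - q + 1),
    (-1 : ℂ) ^ p * stirlingShift k (p + q) b * (bCoeff (p + q) p : ℂ) * a ^ (p + q)

/-!
Expanding the falling factorial around `b + k - 1` gives `(x + b)_k = Σ_ℓ s(k,ℓ;b) x^ℓ`.
Worpitzky's identity `n^ℓ = Σ_j A(ℓ,j) C(n+j,ℓ)`, together with
`C(n+j,ℓ) = Δ^{ℓ-j} (m ↦ C(n+m,m)) (j)`, rewrites `n^ℓ` in the basis `C(n+q,q)`, and collecting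
terms gives `(n a + b)_k = Σ_q g(k,q;a,b) C(n+q,q)`. As `Σ_n C(n+q,q) z^n = (1-z)^{-q-1}`, the
sum over `ν ≥ 0` is `Σ_q g(k,q;a,b) (1-z)^{-q-1}`; the bilateral sum counts it twice and the
term `ν = 0`, which is `(b)_k`, once.
-/

open Polynomial

lemma intCast_add_one_mul_choose_succ (n k : ℕ) :
    ((k : ℤ) + 1) * (n.choose (k + 1) : ℤ) = ((n : ℤ) - k) * n.choose k := by
  rcases le_or_gt k n with hkn | hnk
  · have h := Nat.choose_succ_right_eq n k
    zify [hkn] at h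
    linear_combination h
  · simp [Nat.choose_eq_zero_of_lt hnk, Nat.choose_eq_zero_of_lt (by omega : n < k + 1)]

lemma eulerianNumber_eq_sum_int (n j : ℕ) :
    eulerianNumber n j =
      ∑ i ∈ range (j + 1), (-1) ^ i * ((n + 1).choose i : ℤ) * ((j : ℤ) + 1 - i) ^ n := by
  refine sum_congr rfl fun i hi => ?_
  rw [Nat.cast_sub (by simp at hi; omega)]
  push_cast
  rfl

lemma eulerianNumber_zero_right (n : ℕ) : eulerianNumber n 0 = 1 := by
  simp [eulerianNumber]

lemma eulerianNumber_self_add_one (n : ℕ) : eulerianNumber n (n + 1) = 0 := by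
  have h := congrFun (fwdDiff_iter_pow_eq_zero_of_lt (R := ℤ) (Nat.lt_succ_self n)) 1
  rw [fwdDiff_iter_eq_sum_shift, ← sum_range_reflect, Pi.zero_apply] at h
  rw [eulerianNumber_eq_sum_int, ← h]
  refine sum_congr rfl fun i hi => ?_
  have hi : i ≤ n + 1 := Nat.lt_succ_iff.mp (mem_range.mp hi)
  simp only [Nat.succ_eq_add_one, show n + 1 + 1 - 1 - i = n + 1 - i by omega,
    show n + 1 - (n + 1 - i) = i by omega, Nat.choose_symm hi, smul_eq_mul, nsmul_eq_mul,
    Nat.cast_sub hi]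
  push_cast
  ring

lemma sum_range_neg_one_pow_mul_choose_succ_mul (N t : ℕ) (φ : ℕ → ℤ) :
    ∑ i ∈ range (t + 1), (-1) ^ i * ((N + 1).choose i : ℤ) * φ i =
      ∑ i ∈ range (t + 1), (-1) ^ i * (N.choose i : ℤ) * φ i -
        ∑ i ∈ range t, (-1) ^ i * (N.choose i : ℤ) * φ (i + 1) := by
  rw [sum_range_succ', sum_range_succ' (fun i => (-1) ^ i * (N.choose i : ℤ) * φ i),
    add_sub_right_comm, ← sum_sub_distrib]
  congr 1
  · exact sum_congr rfl fun i _ => by rw [Nat.choose_succ_succ]; push_cast; ring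
  · simp

lemma sum_range_mul_neg_one_pow_mul_choose (N t : ℕ) (φ : ℕ → ℤ) :
    ∑ i ∈ range (t + 1), (i : ℤ) * (-1) ^ i * (N.choose i : ℤ) * φ i =
      -∑ i ∈ range t, ((N : ℤ) - i) * (-1) ^ i * (N.choose i : ℤ) * φ (i + 1) := by
  rw [sum_range_succ', Nat.cast_zero, zero_mul, zero_mul, zero_mul, add_zero,
    ← sum_neg_distrib]
  refine sum_congr rfl fun i _ => ?_
  push_cast
  linear_combination (-1) ^ (i + 1) * φ (i + 1) * intCast_add_one_mul_choose_succ N i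

lemma eulerianNumber_succ_succ (ℓ t : ℕ) :
    eulerianNumber (ℓ + 1) (t + 1) =
      (t + 2) * eulerianNumber ℓ (t + 1) + ((ℓ : ℤ) - t) * eulerianNumber ℓ t := by
  have shift (i : ℕ) : (t : ℤ) + 1 + 1 - ((i + 1 : ℕ) : ℤ) = (t : ℤ) + 1 - i := by
    push_cast; ring
  have pascal := sum_range_neg_one_pow_mul_choose_succ_mul (ℓ + 1) (t + 1)
    fun i => ((t : ℤ) + 1 + 1 - i) ^ (ℓ + 1)
  have absorb := sum_range_mul_neg_one_pow_mul_choose (ℓ + 1) (t + 1)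
    fun i => ((t : ℤ) + 1 + 1 - i) ^ ℓ
  simp only [shift] at pascal absorb
  simp only [eulerianNumber_eq_sum_int]
  push_cast at pascal absorb ⊢
  have split_up : ∑ i ∈ range (t + 1 + 1),
        (-1) ^ i * ((ℓ + 1).choose i : ℤ) * ((t : ℤ) + 1 + 1 - i) ^ (ℓ + 1) =
      ∑ i ∈ range (t + 1 + 1),
        ((t : ℤ) + 2) * ((-1) ^ i * ((ℓ + 1).choose i : ℤ) * ((t : ℤ) + 1 + 1 - i) ^ ℓ) -
      ∑ i ∈ range (t + 1 + 1),
        (i : ℤ) * (-1) ^ i * ((ℓ + 1).choose i : ℤ) * ((t : ℤ) + 1 + 1 - i) ^ ℓ := by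
    rw [← sum_sub_distrib]
    exact sum_congr rfl fun i _ => by ring
  have split_down : ∑ i ∈ range (t + 1),
        (-1) ^ i * ((ℓ + 1).choose i : ℤ) * ((t : ℤ) + 1 - i) ^ (ℓ + 1) =
      ∑ i ∈ range (t + 1),
        ((ℓ : ℤ) + 1 - i) * (-1) ^ i * ((ℓ + 1).choose i : ℤ) * ((t : ℤ) + 1 - i) ^ ℓ -
      ∑ i ∈ range (t + 1),
        ((ℓ : ℤ) - t) * ((-1) ^ i * ((ℓ + 1).choose i : ℤ) * ((t : ℤ) + 1 - i) ^ ℓ) := by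
    rw [← sum_sub_distrib]
    exact sum_congr rfl fun i _ => by ring
  rw [pascal, split_up, split_down, mul_sum, mul_sum]
  linear_combination -absorb

theorem pow_eq_sum_eulerianNumber_mul_choose (ℓ n : ℕ) :
    (n : ℤ) ^ ℓ = ∑ j ∈ range (ℓ + 1), eulerianNumber ℓ j * ((n + j).choose ℓ : ℤ) := by
  induction ℓ with
  | zero => simp [eulerianNumber]
  | succ ℓ ih =>
    have mul_choose (j : ℕ) : (n : ℤ) * (n + j).choose ℓ =
        ((j : ℤ) + 1) * (n + j).choose (ℓ + 1) + ((ℓ : ℤ) - j) * (n + j + 1).choose (ℓ + 1) := by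
      rw [Nat.choose_succ_succ' (n + j) ℓ]
      have h := intCast_add_one_mul_choose_succ (n + j) ℓ
      push_cast at h ⊢
      linear_combination -h
    have extend : ∑ j ∈ range (ℓ + 1), eulerianNumber ℓ j * ((j : ℤ) + 1) * (n + j).choose (ℓ + 1) =
        ∑ j ∈ range (ℓ + 1 + 1), eulerianNumber ℓ j * ((j : ℤ) + 1) * (n + j).choose (ℓ + 1) := by
      rw [sum_range_succ _ (ℓ + 1), eulerianNumber_self_add_one, zero_mul, zero_mul, add_zero]
    calc (n : ℤ) ^ (ℓ + 1)
        = ∑ j ∈ range (ℓ + 1), eulerianNumber ℓ j * ((n : ℤ) * (n + j).choose ℓ) := by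
          rw [pow_succ', ih, mul_sum]
          exact sum_congr rfl fun j _ => by ring
      _ = ∑ j ∈ range (ℓ + 1), eulerianNumber ℓ j * ((j : ℤ) + 1) * (n + j).choose (ℓ + 1) +
          ∑ j ∈ range (ℓ + 1), eulerianNumber ℓ j * ((ℓ : ℤ) - j) * (n + j + 1).choose (ℓ + 1) := by
          rw [← sum_add_distrib]
          exact sum_congr rfl fun j _ => by rw [mul_choose]; ring
      _ = ∑ j ∈ range (ℓ + 1 + 1), eulerianNumber (ℓ + 1) j * (n + j).choose (ℓ + 1) := by
          rw [extend, sum_range_succ', sum_range_succ' _ (ℓ + 1), eulerianNumber_zero_right,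
            eulerianNumber_zero_right]
          simp only [eulerianNumber_succ_succ]
          push_cast
          rw [add_right_comm, ← sum_add_distrib]
          congr 1
          exact sum_congr rfl fun j _ => by ring_nf

lemma fwdDiff_iter_choose_add_self (n i s : ℕ) :
    (fwdDiff 1)^[s] (fun x : ℕ => ((n + x).choose (x + i) : ℤ)) =
      fun x => ((n + x).choose (x + (i + s)) : ℤ) := by
  induction s generalizing i with
  | zero => rfl
  | succ s ih =>
    have step : fwdDiff 1 (fun x : ℕ => ((n + x).choose (x + i) : ℤ)) =
        fun x => ((n + x).choose (x + (i + 1)) : ℤ) := by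
      ext x
      rw [fwdDiff, show n + (x + 1) = n + x + 1 by ring, show x + 1 + i = x + i + 1 by ring,
        Nat.choose_succ_succ', Nat.cast_add, add_sub_cancel_left, ← add_assoc]
    rw [Function.iterate_succ_apply, step, ih, add_right_comm i, add_assoc i]

lemma choose_add_eq_sum_choose (n j s : ℕ) :
    ((n + j).choose (j + s) : ℤ) =
      ∑ k ∈ range (s + 1), (-1) ^ (s - k) * (s.choose k : ℤ) * (n + (j + k)).choose (j + k) := by
  have h := congrFun (fwdDiff_iter_choose_add_self n 0 s) j
  rw [fwdDiff_iter_eq_sum_shift] at h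
  simpa [add_comm] using h.symm

theorem pow_eq_sum_bCoeff_mul_choose (ℓ n : ℕ) :
    (n : ℤ) ^ ℓ =
      ∑ q ∈ range (ℓ + 1), (-1) ^ (ℓ - q) * bCoeff ℓ (ℓ - q) * ((n + q).choose q : ℤ) := by
  calc (n : ℤ) ^ ℓ
      = ∑ j ∈ range (ℓ + 1), ∑ k ∈ range (ℓ + 1 - j), eulerianNumber ℓ j *
          ((-1) ^ (ℓ - j - k) * ((ℓ - j).choose k : ℤ) * (n + (j + k)).choose (j + k)) := by
        rw [pow_eq_sum_eulerianNumber_mul_choose]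
        refine sum_congr rfl fun j hj => ?_
        have hj : j ≤ ℓ := Nat.lt_succ_iff.mp (mem_range.mp hj)
        have h := choose_add_eq_sum_choose n j (ℓ - j)
        rw [Nat.add_sub_cancel' hj] at h
        rw [← mul_sum, h, Nat.sub_add_comm hj]
    _ = ∑ m ∈ range (ℓ + 1), ∑ j ∈ range (m + 1), eulerianNumber ℓ j *
          ((-1) ^ (ℓ - j - (m - j)) * ((ℓ - j).choose (m - j) : ℤ) *
            (n + (j + (m - j))).choose (j + (m - j))) :=
        (sum_range_diag_flip _ _).symm
    _ = _ := by
        refine sum_congr rfl fun m hm => ?_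
        have hm : m ≤ ℓ := Nat.lt_succ_iff.mp (mem_range.mp hm)
        rw [bCoeff, Nat.sub_sub_self hm, mul_sum, sum_mul]
        refine sum_congr rfl fun j hj => ?_
        have hj : j ≤ m := Nat.lt_succ_iff.mp (mem_range.mp hj)
        rw [Nat.add_sub_cancel' hj, show ℓ - j - (m - j) = ℓ - m by omega,
          Nat.choose_symm_of_eq_add (show ℓ - j = (m - j) + (ℓ - m) by omega)]
        ring

lemma ascPochhammer_eval_add_eq_sum_stirlingShift (k : ℕ) (x y : ℂ) :
    (ascPochhammer ℂ k).eval (x + y) = ∑ ℓ ∈ range (k + 1), stirlingShift k ℓ y * x ^ ℓ := by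
  have shift : (ascPochhammer ℂ k).eval (x + y) =
      (descPochhammer ℂ k).eval (x + (y + k - 1)) := by
    rw [descPochhammer_eval_eq_ascPochhammer]
    ring_nf
  rw [shift, ← descPochhammer_map (Int.castRingHom ℂ), eval_map, eval₂_eq_sum_range,
    descPochhammer_natDegree]
  simp only [add_pow, mul_sum, range_eq_Ico]
  rw [← sum_Ico_Ico_comm]
  refine sum_congr rfl fun ℓ _ => ?_
  rw [stirlingShift, ← Ico_add_one_right_eq_Icc, sum_mul]
  refine sum_congr rfl fun m _ => ?_
  simp only [eq_intCast]
  ring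

theorem ascPochhammer_eval_natCast_mul_add (k n : ℕ) (a b : ℂ) :
    (ascPochhammer ℂ k).eval ((n : ℂ) * a + b) =
      ∑ q ∈ range (k + 1), gCoeff k q a b * ((n + q).choose q : ℂ) := by
  calc (ascPochhammer ℂ k).eval ((n : ℂ) * a + b)
      = ∑ ℓ ∈ range (k + 1), ∑ q ∈ range (ℓ + 1),
          (-1) ^ (ℓ - q) * stirlingShift k (q + (ℓ - q)) b * (bCoeff (q + (ℓ - q)) (ℓ - q) : ℂ) *
            a ^ (q + (ℓ - q)) * ((n + q).choose q : ℂ) := by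
        rw [ascPochhammer_eval_add_eq_sum_stirlingShift]
        refine sum_congr rfl fun ℓ _ => ?_
        have h := congrArg (Int.cast : ℤ → ℂ) (pow_eq_sum_bCoeff_mul_choose ℓ n)
        push_cast at h
        rw [mul_pow, h, sum_mul, mul_sum]
        refine sum_congr rfl fun q hq => ?_
        rw [Nat.add_sub_cancel' (Nat.lt_succ_iff.mp (mem_range.mp hq))]
        ring
    _ = ∑ q ∈ range (k + 1), ∑ p ∈ range (k + 1 - q),
          (-1) ^ p * stirlingShift k (q + p) b * (bCoeff (q + p) p : ℂ) * a ^ (q + p) *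
            ((n + q).choose q : ℂ) :=
        sum_range_diag_flip (k + 1) fun q p =>
          (-1) ^ p * stirlingShift k (q + p) b * (bCoeff (q + p) p : ℂ) * a ^ (q + p) *
            ((n + q).choose q : ℂ)
    _ = _ := by
        refine sum_congr rfl fun q hq => ?_
        rw [gCoeff, sum_mul, Nat.sub_add_comm (Nat.lt_succ_iff.mp (mem_range.mp hq))]
        simp only [add_comm q]

theorem hasSum_ascPochhammer_eval_natCast_mul_add_mul_pow (k : ℕ) (a b : ℂ) {z : ℂ}
    (hz : ‖z‖ < 1) :
    HasSum (fun n : ℕ => (ascPochhammer ℂ k).eval ((n : ℂ) * a + b) * z ^ n)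
      (∑ q ∈ range (k + 1), gCoeff k q a b * (1 - z) ^ (-(q : ℤ) - 1)) := by
  simp_rw [ascPochhammer_eval_natCast_mul_add, sum_mul, mul_assoc]
  refine hasSum_sum fun q _ => ?_
  rw [show -(q : ℤ) - 1 = -((q + 1 : ℕ) : ℤ) by push_cast; ring, zpow_neg, zpow_natCast,
    ← one_div]
  exact (hasSum_choose_mul_geometric_of_norm_lt_one q hz).mul_left _

lemma HasSum.comp_natAbs {G : Type*} [AddCommGroup G] [TopologicalSpace G]
    [IsTopologicalAddGroup G] {f : ℕ → G} {s : G} (hf : HasSum f s) :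
    HasSum (fun ν : ℤ => f ν.natAbs) (s + s - f 0) :=
  HasSum.of_nat_of_neg (f := fun ν : ℤ => f ν.natAbs) (by simpa using hf) (by simpa using hf)

/-- `Σ_{ν=-∞}^{∞} (|ν|a+b)_k z^{|ν|} = -(b)_k + 2 Σ_{q=0}^k g(k,q;a,b) (1-z)^{-q-1}`
for `|z| < 1`. -/
theorem bilateral_pochhammer_sum (k : ℕ) (a b : ℂ) (z : ℂ) (hz : ‖z‖ < 1) :
    HasSum (fun ν : ℤ =>
        (ascPochhammer ℂ k).eval ((ν.natAbs : ℂ) * a + b) * z ^ ν.natAbs)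
      (-(ascPochhammer ℂ k).eval b +
        2 * ∑ q ∈ Finset.range (k + 1), gCoeff k q a b * (1 - z) ^ (-(q : ℤ) - 1)) := by
  rw [neg_add_eq_sub, two_mul]
  simpa using (hasSum_ascPochhammer_eval_natCast_mul_add_mul_pow k a b hz).comp_natAbs
end

section
/- For a positive integer q, the numbers G(n,n,q) defined by G(n,ℓ,q) = Σ_{k=1}^{n} [(-1)^{n-k}(q)_k/(k!(n+k)!)]·H_{ℓ+k}(n,k), where H_{n+k}(n,k) = (k!(n+k)!/n!)·B_{n,k}(1/2,1/3,1/4,…), satisfy the generating function relation Σ_{n=1}^{∞} (-1)^n G(n,n,q)·x^n = (x/(e^x − 1))^{q} − 1. -/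
/-!
Put `Y = (eˣ - 1)/x - 1`, a power series without constant term. The hypothesis on `B` says
`coeff n (Y ^ k) = k! B_{n,k} / n!`, so after the factorials cancel,
`1 + Σ_{n ≥ 1} (-1)ⁿ G(n,n,q) xⁿ = Σ_k (-1)ᵏ (q)_k / k! · Yᵏ`. Since
`choose (-q) k = (-1)ᵏ (q)_k / k!`, this is the binomial series of `(1 + X)^(-q)` with `Y`
substituted for `X`. Substitution is a ring homomorphism, so `(1 + X)^(-q) (1 + X)^q = 1` becomes
`(1 + X)^(-q)[Y] · (1 + Y)^q = 1`, i.e. the series is `(1 + Y)^(-q) = (x/(eˣ - 1))^q`.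
-/

open Finset PowerSeries

theorem Ring.choose_neg_eq_ascPochhammer_eval_div {K : Type*} [Field K] [CharZero K]
    (a : K) (k : ℕ) :
    Ring.choose (-a) k = (-1) ^ k * (ascPochhammer K k).eval a / k.factorial := by
  rw [Ring.choose_neg', eq_div_iff (Nat.cast_ne_zero.2 k.factorial_ne_zero),
    ← Polynomial.ascPochhammer_smeval_eq_eval,
    ← Ring.factorial_nsmul_multichoose_eq_ascPochhammer, Units.smul_def, Int.coe_negOnePow_natCast,
    zsmul_eq_mul, nsmul_eq_mul]
  push_cast
  ring

theorem neg_one_pow_mul_neg_one_pow_sub {R : Type*} [Monoid R] [HasDistribNeg R] {m k : ℕ}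
    (h : k ≤ m) : (-1 : R) ^ m * (-1) ^ (m - k) = (-1) ^ k := by
  obtain ⟨j, rfl⟩ := Nat.exists_eq_add_of_le h
  rw [Nat.add_sub_cancel_left, pow_add, mul_assoc, ← pow_add, ← two_mul, pow_mul, neg_one_sq,
    one_pow, mul_one]

namespace PowerSeries

theorem binomialSeries_neg_natCast_mul_one_add_X_pow {R A : Type*} [CommRing R] [BinomialRing R]
    [Ring A] [Algebra R A] (d : ℕ) : binomialSeries A (-(d : R)) * (1 + X) ^ d = 1 := by
  rw [← binomialSeries_nat (R := R), ← binomialSeries_add, neg_add_cancel, binomialSeries_zero]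

section Substitution

variable {R : Type*} [CommRing R] {a : R⟦X⟧}

theorem coeff_pow_eq_zero_of_lt (ha : constantCoeff a = 0) {n d : ℕ} (h : n < d) :
    coeff n (a ^ d) = 0 :=
  X_pow_dvd_iff.1 (pow_dvd_pow_of_dvd (X_dvd_iff.2 ha) d) n h

theorem coeff_subst_eq_sum_range (ha : constantCoeff a = 0) (f : R⟦X⟧) (n : ℕ) :
    coeff n (f.subst a) = ∑ d ∈ range (n + 1), coeff d f * coeff n (a ^ d) := by
  rw [coeff_subst' (HasSubst.of_constantCoeff_zero' ha)]
  refine finsum_eq_sum_of_support_subset _ fun d hd => ?_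
  by_contra h
  simp only [coe_range, Set.mem_Iio, not_lt] at h
  exact hd (by simp only [coeff_pow_eq_zero_of_lt ha (show n < d by omega), smul_zero])

end Substitution

section Field

variable {K : Type*} [Field K]

theorem inv_pow_of_constantCoeff_ne_zero {φ : K⟦X⟧} (h : constantCoeff φ ≠ 0) (n : ℕ) :
    φ⁻¹ ^ n = (φ ^ n)⁻¹ := by
  rw [eq_inv_iff_mul_eq_one (by simpa using pow_ne_zero n h), ← mul_pow,
    PowerSeries.inv_mul_cancel φ h, one_pow]

theorem mk_one_div_factorial_succ_eq_one_add :
    (mk fun n => (1 : K) / (n + 1).factorial) =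
      1 + mk fun m => if m = 0 then 0 else 1 / ((m : K) + 1) / m.factorial := by
  ext (_ | m)
  · simp
  · simp only [coeff_mk, map_add, coeff_one, Nat.succ_ne_zero, if_false, zero_add,
      Nat.factorial_succ m.succ]
    push_cast
    field_simp

variable [CharZero K] {a : K⟦X⟧}

theorem coeff_subst_binomialSeries_neg (ha : constantCoeff a = 0) (c : K) (n : ℕ) :
    coeff n ((binomialSeries K (-c)).subst a) =
      ∑ k ∈ range (n + 1),
        (-1) ^ k * (ascPochhammer K k).eval c / k.factorial * coeff n (a ^ k) := by
  simp only [coeff_subst_eq_sum_range ha, binomialSeries_coeff, smul_eq_mul, mul_one,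
    Ring.choose_neg_eq_ascPochhammer_eval_div]

theorem subst_binomialSeries_neg_natCast_mul_one_add_pow (ha : constantCoeff a = 0) (d : ℕ) :
    (binomialSeries K (-(d : K))).subst a * (1 + a) ^ d = 1 := by
  have := congrArg (substAlgHom (HasSubst.of_constantCoeff_zero' ha))
    (binomialSeries_neg_natCast_mul_one_add_X_pow (R := K) (A := K) d)
  rwa [map_mul, map_pow, map_add, map_one, substAlgHom_X, coe_substAlgHom] at this

end Field

end PowerSeries

theorem generating_function_G_general (q : ℕ)
    (B : ℕ → ℕ → ℝ)
    (hB : ∀ j : ℕ,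
      (PowerSeries.mk fun i : ℕ => B i j / (i.factorial : ℝ)) =
        ((j.factorial : ℝ))⁻¹ •
          (PowerSeries.mk fun m : ℕ =>
            if m = 0 then (0 : ℝ) else (1 / ((m : ℝ) + 1)) / (m.factorial : ℝ)) ^ j)
    (G : ℕ → ℝ)
    (hG : ∀ n : ℕ,
      G n = ∑ k ∈ Finset.Icc 1 n,
        (-1 : ℝ) ^ (n - k) * (ascPochhammer ℝ k).eval (q : ℝ) /
            ((k.factorial : ℝ) * ((n + k).factorial : ℝ)) *
          (((k.factorial : ℝ) * ((n + k).factorial : ℝ) / (n.factorial : ℝ)) * B n k)) :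
    (PowerSeries.mk fun n : ℕ => if n = 0 then (0 : ℝ) else (-1 : ℝ) ^ n * G n) =
      ((PowerSeries.mk fun n : ℕ => (1 : ℝ) / ((n + 1).factorial : ℝ))⁻¹) ^ q - 1 := by
  set Y : ℝ⟦X⟧ := mk fun m => if m = 0 then 0 else 1 / ((m : ℝ) + 1) / m.factorial
  have hY : constantCoeff Y = 0 := by simp [Y, ← coeff_zero_eq_constantCoeff_apply]
  have hBY (n k : ℕ) : coeff n (Y ^ k) = k.factorial * (B n k / n.factorial) := by
    have := congrArg (coeff n) (hB k)
    rw [coeff_mk, map_smul, smul_eq_mul] at this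
    rw [this, mul_inv_cancel_left₀ (by positivity)]
  have hsubst : (mk fun n => if n = 0 then 0 else (-1) ^ n * G n) + 1 =
      (PowerSeries.binomialSeries ℝ (-(q : ℝ))).subst Y := by
    ext (_ | n)
    · simp [coeff_subst_binomialSeries_neg hY]
    rw [map_add, coeff_mk, coeff_one, if_neg n.succ_ne_zero, if_neg n.succ_ne_zero, add_zero,
      coeff_subst_binomialSeries_neg hY, Nat.range_succ_eq_Icc_zero,
      ← add_sum_Ioc_eq_sum_Icc (Nat.zero_le _), ← Icc_add_one_left_eq_Ioc, pow_zero, pow_zero,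
      coeff_one, if_neg n.succ_ne_zero, mul_zero, zero_add, zero_add, hG, mul_sum]
    refine sum_congr rfl fun k hk => ?_
    rw [hBY, ← neg_one_pow_mul_neg_one_pow_sub (mem_Icc.1 hk).2]
    field_simp
  rw [eq_sub_iff_add_eq, hsubst, mk_one_div_factorial_succ_eq_one_add,
    inv_pow_of_constantCoeff_ne_zero (by simp), eq_inv_iff_mul_eq_one (by simp),
    subst_binomialSeries_neg_natCast_mul_one_add_pow hY]

/-- For the partial Bell polynomials `B n k = B_{n,k}(1/2, 1/3, 1/4, …)` (characterized by the
generating relation `Σ_n B_{n,k} tⁿ/n! = (1/k!)(Σ_{m≥1} tᵐ/((m+1)·m!))ᵏ`), the numbers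
`G(n,n,q) = Σ_{k=1}^n (-1)^{n-k} (q)_k/(k!(n+k)!) · H_{n+k}(n,k)` with
`H_{n+k}(n,k) = (k!(n+k)!/n!)·B_{n,k}(1/2,1/3,…)` satisfy
`Σ_{n≥1} (-1)ⁿ G(n,n,q) xⁿ = (x/(eˣ-1))^q − 1` as a power-series identity, where
`(eˣ-1)/x` is the power series `Σ_n xⁿ/(n+1)!`. -/
theorem generating_function_G (q : ℕ) (hq : 0 < q)
    (B : ℕ → ℕ → ℝ)
    (hB : ∀ j : ℕ,
      (PowerSeries.mk fun i : ℕ => B i j / (i.factorial : ℝ)) =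
        ((j.factorial : ℝ))⁻¹ •
          (PowerSeries.mk fun m : ℕ =>
            if m = 0 then (0 : ℝ) else (1 / ((m : ℝ) + 1)) / (m.factorial : ℝ)) ^ j)
    (G : ℕ → ℝ)
    (hG : ∀ n : ℕ,
      G n = ∑ k ∈ Finset.Icc 1 n,
        (-1 : ℝ) ^ (n - k) * (ascPochhammer ℝ k).eval (q : ℝ) /
            ((k.factorial : ℝ) * ((n + k).factorial : ℝ)) *
          (((k.factorial : ℝ) * ((n + k).factorial : ℝ) / (n.factorial : ℝ)) * B n k)) :
    (PowerSeries.mk fun n : ℕ => if n = 0 then (0 : ℝ) else (-1 : ℝ) ^ n * G n) =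
      ((PowerSeries.mk fun n : ℕ => (1 : ℝ) / ((n + 1).factorial : ℝ))⁻¹) ^ q - 1 :=
  generating_function_G_general q B hB G hG
end
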